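/- arXiv:1212.6789 — 3 statements merged into one kernel-verified Lean document; each statement's English description precedes it below -/
import Mathlib

section
/- Let λ be an n-partition, σ an n-permutation, and T a semistandard tableau of shape λ. Then M(T) = Y_λ(σ) if and only if T(l,k) ∈ G_λ(T,σ;l,k) for every box (l,k) of λ. -/
/-
Common combinatorial set-up for "Tableaux for Key Polynomials, Demazure
Characters, and Atoms" (Proctor–Willis).

Conventions: a box `(j, i)` means column `j`, row `i`, both 1-indexed.
Partial (remnant) tableaux are encoded by their column-length functions
`c : ℕ → ℕ` (each column of a remnant is a top segment of the original
column), together with the ambient value function `T : ℕ → ℕ → ℕ`.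
-/

open scoped BigOperators Classical

noncomputable section

namespace KeyPoly

open MvPolynomial

/-- An `n`-partition `λ = (λ_1, …, λ_n)` with `λ_1 ≥ … ≥ λ_n ≥ 0`,
recorded as a function on `1, …, n`, vanishing beyond `n`. -/
structure NPartition (n : ℕ) where
  part : ℕ → ℕ
  antitone : ∀ ⦃i j : ℕ⦄, 1 ≤ i → i ≤ j → part j ≤ part i
  outside : ∀ i : ℕ, n < i → part i = 0

variable {n : ℕ}

/-- The column length `ζ_j` of the Young diagram of `λ`. -/
def zeta (lam : NPartition n) (j : ℕ) : ℕ :=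
  ((Finset.Icc 1 n).filter fun i => j ≤ lam.part i).card

/-- The box `(j,i)` (column `j`, row `i`) belongs to the diagram of `λ`. -/
def InShape (lam : NPartition n) (j i : ℕ) : Prop :=
  1 ≤ j ∧ 1 ≤ i ∧ i ≤ n ∧ j ≤ lam.part i

/-- The boxes of the diagram of `λ`, as a finite set of pairs (column, row). -/
def boxes (lam : NPartition n) : Finset (ℕ × ℕ) :=
  (Finset.Icc 1 (lam.part 1) ×ˢ Finset.Icc 1 n).filter fun b => b.1 ≤ lam.part b.2

/-- `T` is a semistandard tableau of shape `λ` with values in `[1,n]`: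
rows weakly increase eastward, columns strictly increase southward. -/
def IsSSYT (lam : NPartition n) (T : ℕ → ℕ → ℕ) : Prop :=
  (∀ j i, InShape lam j i → 1 ≤ T j i ∧ T j i ≤ n) ∧
  (∀ j i, InShape lam (j + 1) i → T j i ≤ T (j + 1) i) ∧
  (∀ j i, InShape lam j (i + 1) → T j i < T j (i + 1))

/-- Normalization: the filling vanishes outside the shape. -/
def ZeroOutside (lam : NPartition n) (T : ℕ → ℕ → ℕ) : Prop :=
  ∀ j i, ¬ InShape lam j i → T j i = 0

/-- `T(l, k+1)`, with the boundary convention `n+1` when `k = ζ_l`. -/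
def south (lam : NPartition n) (T : ℕ → ℕ → ℕ) (l k : ℕ) : ℕ :=
  if InShape lam l (k + 1) then T l (k + 1) else n + 1

/-- `T(l+1, k)`, with the boundary convention `n` when `l = λ_k`. -/
def east (lam : NPartition n) (T : ℕ → ℕ → ℕ) (l k : ℕ) : ℕ :=
  if InShape lam (l + 1) k then T (l + 1) k else n

/-- An `n`-permutation: a tuple `(p 1, …, p n)` of distinct entries from `[1,n]`. -/
def IsNPerm (n : ℕ) (p : ℕ → ℕ) : Prop :=
  Set.BijOn p (Set.Icc 1 n) (Set.Icc 1 n)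

/-- The `λ`-key `Y_λ(π)`: column `j` is `π_1, …, π_{ζ_j}` sorted increasingly
(from top to bottom); zero outside the shape. -/
def keyTab (lam : NPartition n) (p : ℕ → ℕ) (j i : ℕ) : ℕ :=
  if InShape lam j i then
    (((Finset.Icc 1 (zeta lam j)).image p).sort (· ≤ ·)).getD (i - 1) 0
  else 0

/-- A semistandard `T` is a key if the values of each column contain the
values of every column to its east. -/
def colSet (lam : NPartition n) (T : ℕ → ℕ → ℕ) (j : ℕ) : Finset ℕ :=
  (Finset.Icc 1 (zeta lam j)).image (T j)

def IsKey (lam : NPartition n) (T : ℕ → ℕ → ℕ) : Prop :=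
  ∀ j j' : ℕ, 1 ≤ j → j ≤ j' → j' ≤ lam.part 1 → colSet lam T j' ⊆ colSet lam T j

/-! ### The (right) scanning method -/

/-- The next column of the scanning path: the earliest column `h' > h`
(up to `maxCol`) whose column bottom in the remnant `c` is nonempty and has
value weakly larger than the bottom value of column `h`. -/
def nextCol (T : ℕ → ℕ → ℕ) (c : ℕ → ℕ) (maxCol h : ℕ) : Option ℕ :=
  (List.range' (h + 1) (maxCol - h)).find?
    (fun h' => decide (0 < c h' ∧ T h (c h) ≤ T h' (c h')))

/-- Columns of the scanning path (EWIS of column bottoms) starting at column `h`,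
with explicit fuel. -/
def pathColsAux (T : ℕ → ℕ → ℕ) (c : ℕ → ℕ) (maxCol : ℕ) : ℕ → ℕ → List ℕ
  | 0, h => [h]
  | fuel + 1, h =>
    match nextCol T c maxCol h with
    | none => [h]
    | some h' => h :: pathColsAux T c maxCol fuel h'

/-- Columns of the scanning path starting at the bottom of column `j` of the
remnant with column lengths `c`. -/
def pathCols (T : ℕ → ℕ → ℕ) (c : ℕ → ℕ) (maxCol j : ℕ) : List ℕ :=
  pathColsAux T c maxCol maxCol j

/-- Remove the scanning path starting in column `j` from the remnant `c`. -/
def removePath (T : ℕ → ℕ → ℕ) (c : ℕ → ℕ) (maxCol j : ℕ) : ℕ → ℕ :=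
  fun h => if h ∈ pathCols T c maxCol j then c h - 1 else c h

/-- Iterate path removal `r` times, always starting from column `j`. -/
def remnantIter (T : ℕ → ℕ → ℕ) (c0 : ℕ → ℕ) (maxCol j : ℕ) : ℕ → ℕ → ℕ
  | 0 => c0
  | r + 1 => removePath T (remnantIter T c0 maxCol j r) maxCol j

/-- Column lengths of the remnant tableau `T^{(j;i)}`. -/
def remnant (lam : NPartition n) (T : ℕ → ℕ → ℕ) (j i : ℕ) : ℕ → ℕ :=
  remnantIter T (zeta lam) (lam.part 1) j (zeta lam j - i)

/-- The scanning path `P(T; j, i)`, recorded by its list of columns. -/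
def scanPath (lam : NPartition n) (T : ℕ → ℕ → ℕ) (j i : ℕ) : List ℕ :=
  pathCols T (remnant lam T j i) (lam.part 1) j

/-- The scanning value `S(T; j, i)`: the last value of the EWIS from `(j,i)`. -/
def scanValue (lam : NPartition n) (T : ℕ → ℕ → ℕ) (j i : ℕ) : ℕ :=
  T ((scanPath lam T j i).getLastD j)
    (remnant lam T j i ((scanPath lam T j i).getLastD j))

/-- The box `(l,k)` lies on the scanning path `P(T; j, i)`. -/
def InScanPath (lam : NPartition n) (T : ℕ → ℕ → ℕ) (j i l k : ℕ) : Prop :=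
  l ∈ scanPath lam T j i ∧ k = remnant lam T j i l

/-- `m(U)` where `U` is the remnant with column lengths `c` restricted to the
columns `l+1, …, maxCol`:  the maximum of the column-bottom values, with the
convention `m((())) = 1` for the empty tableau. -/
def mEast (T : ℕ → ℕ → ℕ) (c : ℕ → ℕ) (maxCol l : ℕ) : ℕ :=
  max 1 (((Finset.Icc (l + 1) maxCol).filter fun h => 0 < c h).sup fun h => T h (c h))

/-! ### The condition sets A, C, and B -/

/-- The set `A_λ(T, π; l, k)`. -/
def Aset (lam : NPartition n) (T : ℕ → ℕ → ℕ) (p : ℕ → ℕ) (l k : ℕ) : Set ℕ :=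
  if keyTab lam p l k < mEast T (remnant lam T l k) (lam.part 1) l then (∅ : Set ℕ)
  else Set.Icc k (min (keyTab lam p l k) (min (south lam T l k - 1) (east lam T l k)))

/-- The set `C_λ(T, π; l, k)`. -/
def Cset (lam : NPartition n) (T : ℕ → ℕ → ℕ) (p : ℕ → ℕ) (l k : ℕ) : Set ℕ :=
  if l = lam.part 1 then {keyTab lam p l k}
  else if keyTab lam p l k < mEast T (remnant lam T l k) (lam.part 1) l then (∅ : Set ℕ)
  else if mEast T (remnant lam T l k) (lam.part 1) l = keyTab lam p l k then
    Set.Icc k (min (keyTab lam p l k) (min (south lam T l k - 1) (east lam T l k)))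
  else {keyTab lam p l k} ∩ Set.Icc k (min (south lam T l k - 1) (east lam T l k))

/-- The row index `a(l,k;j)`:  the `i` with `(l-1,k) ∈ P(T;j,i)`
(convention `a(l,k;l) = k`). -/
def aIdx (lam : NPartition n) (T : ℕ → ℕ → ℕ) (l k j : ℕ) : ℕ :=
  if j = l then k
  else ((Finset.Icc 1 (zeta lam j)).filter fun i => InScanPath lam T j i (l - 1) k).sup id

/-- The row index `b(l,k;j)`:  the `i` with `(l,k+1) ∈ P(T;j,i)` when `k < ζ_l`,
and `ζ_j + 1` when `k = ζ_l` (convention `b(l,k;l) = k+1`). -/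
def bIdx (lam : NPartition n) (T : ℕ → ℕ → ℕ) (l k j : ℕ) : ℕ :=
  if j = l then k + 1
  else if k = zeta lam l then zeta lam j + 1
  else ((Finset.Icc 1 (zeta lam j)).filter fun i => InScanPath lam T j i l (k + 1)).sup id

/-- `E(l,k;j,i)`:  the value of `T` at the box `(h,m)` of `P(T;j,i)` with `h < l`
maximal (convention `E(l,k;l,k) = k`). -/
def Epath (lam : NPartition n) (T : ℕ → ℕ → ℕ) (l k j i : ℕ) : ℕ :=
  if j = l then k
  else
    T (((scanPath lam T j i).filter fun h => decide (h < l)).foldr max 0)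
      (remnant lam T j i (((scanPath lam T j i).filter fun h => decide (h < l)).foldr max 0))

/-- The set `B_λ(T, π; l, k) = ⋂_{j=1}^{l} ⋃_{i=a(j)}^{b(j)-1} [E(l,k;j,i), Y_λ(π)(j,i)]`. -/
def Bset (lam : NPartition n) (T : ℕ → ℕ → ℕ) (p : ℕ → ℕ) (l k : ℕ) : Set ℕ :=
  {v | ∀ j, 1 ≤ j → j ≤ l →
    ∃ i, aIdx lam T l k j ≤ i ∧ i + 1 ≤ bIdx lam T l k j ∧
      Epath lam T l k j i ≤ v ∧ v ≤ keyTab lam p j i}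

/-! ### The left scanning method -/

/-- The largest row `r ≤ c j` of column `j` whose value is at most `x`. -/
def maxRow (T : ℕ → ℕ → ℕ) (c : ℕ → ℕ) (j x : ℕ) : ℕ :=
  ((Finset.Icc 1 (c j)).filter fun r => T j r ≤ x).sup id

/-- The rows of the maximizing weakly decreasing sequence through columns
`j, j-1, …, 1` with initial bound `x`, in a remnant with column lengths `c`. -/
def leftRows (T : ℕ → ℕ → ℕ) (c : ℕ → ℕ) : ℕ → ℕ → List ℕ
  | 0, _ => []
  | j + 1, x => maxRow T c (j + 1) x :: leftRows T c j (T (j + 1) (maxRow T c (j + 1) x))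

/-- The column-1 value at the end of the left scanning path originating at `(j, r)`. -/
def leftEndVal (T : ℕ → ℕ → ℕ) (c : ℕ → ℕ) (j r : ℕ) : ℕ :=
  T 1 ((leftRows T c j (T j r)).getLastD 0)

/-- Remove the left scanning path originating at `(l, c l)`, together with
all values beneath it, from the remnant `c`. -/
def leftRemovePath (T : ℕ → ℕ → ℕ) (c : ℕ → ℕ) (l : ℕ) : ℕ → ℕ :=
  fun j =>
    if 1 ≤ j ∧ j ≤ l then (leftRows T c l (T l (c l))).getD (l - j) 0 - 1 else c j

/-- Iterate left-path removal `r` times (always for column `l`). -/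
def leftRemnantIter (T : ℕ → ℕ → ℕ) (c0 : ℕ → ℕ) (l : ℕ) : ℕ → ℕ → ℕ
  | 0 => c0
  | r + 1 => leftRemovePath T (leftRemnantIter T c0 l r) l

/-- Column lengths of the left remnant used to compute `M(T; l, i)`:
`T` restricted to its first `l` columns with the left scanning paths
originating at `(l, ζ_l), …, (l, i+1)` (and everything beneath them) removed. -/
def leftRemnant (lam : NPartition n) (T : ℕ → ℕ → ℕ) (l i : ℕ) : ℕ → ℕ :=
  leftRemnantIter T (zeta lam) l (zeta lam l - i)

/-- The left scanning value `M(T; l, i)`. -/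
def leftScanValue (lam : NPartition n) (T : ℕ → ℕ → ℕ) (l i : ℕ) : ℕ :=
  leftEndVal T (leftRemnant lam T l i) l i

/-! ### The condition sets F and G -/

/-- The set `F_λ(T, σ; l, k)`. -/
def Fset (lam : NPartition n) (T : ℕ → ℕ → ℕ) (sg : ℕ → ℕ) (l k : ℕ) : Set ℕ :=
  if l = 1 then Set.Icc (keyTab lam sg 1 k) (south lam T 1 k - 1)
  else
    let U := leftRemnant lam T l k
    let q := maxRow T U (l - 1) (south lam T l k - 1)
    let P := (Finset.Icc 1 q).filter fun h => keyTab lam sg l k ≤ leftEndVal T U (l - 1) h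
    if hP : P.Nonempty then Set.Icc (T (l - 1) (P.min' hP)) (south lam T l k - 1)
    else (∅ : Set ℕ)

/-- The set `G_λ(T, σ; l, k)`. -/
def Gset (lam : NPartition n) (T : ℕ → ℕ → ℕ) (sg : ℕ → ℕ) (l k : ℕ) : Set ℕ :=
  if l = 1 then {keyTab lam sg 1 k}
  else
    let U := leftRemnant lam T l k
    let q := maxRow T U (l - 1) (south lam T l k - 1)
    let P := (Finset.Icc 1 q).filter fun h => leftEndVal T U (l - 1) h = keyTab lam sg l k
    if hP : P.Nonempty then
      Set.Icc (T (l - 1) (P.min' hP))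
        (min ((if P.max' hP + 1 ≤ U (l - 1) then T (l - 1) (P.max' hP + 1) else n + 1) - 1)
          (south lam T l k - 1))
    else (∅ : Set ℕ)

/-! ### Polynomials, divided differences, words -/

/-- Polynomials in the variables `X 1, …, X n` (indexed by `ℕ`) over `ℚ`. -/
abbrev Poly : Type := MvPolynomial ℕ ℚ

/-- The action of `s_i` on polynomials: interchange `x_i` and `x_{i+1}`. -/
def sOp (i : ℕ) (P : Poly) : Poly := rename (Equiv.swap i (i + 1)) P

/-- The divided difference operator
`ρ_i = (x_i - x_{i+1})⁻¹ ∘ (1 - s_i) ∘ x_i`, defined as the unique polynomial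
`Q` with `(x_i - x_{i+1}) Q = x_i P - s_i (x_i P)`. -/
def rhoOp (i : ℕ) (P : Poly) : Poly :=
  if h : ∃ Q : Poly, (X i - X (i + 1)) * Q = X i * P - sOp i (X i * P) then h.choose
  else 0

/-- The operator `ρ̄_i := ρ_i - 1`. -/
def rhoBarOp (i : ℕ) (P : Poly) : Poly := rhoOp i P - P

/-- Apply operators indexed by a word `[i_t, …, i_1]`, rightmost first:
`applyOps f [i_t, …, i_1] P = f i_t (⋯ (f i_1 P))`. -/
def applyOps (f : ℕ → Poly → Poly) : List ℕ → Poly → Poly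
  | [], P => P
  | i :: w, P => f i (applyOps f w P)

/-- The monomial `x_1^{λ_1} ⋯ x_n^{λ_n}`. -/
def lamMonomial (lam : NPartition n) : Poly :=
  ∏ i ∈ Finset.Icc 1 n, X i ^ lam.part i

/-- The weight monomial `x^T = ∏ x_i^{c_i}` of the filling `T`. -/
def weight (lam : NPartition n) (T : ℕ → ℕ → ℕ) : Poly :=
  ∏ b ∈ boxes lam, X (T b.1 b.2)

/-- The simple reflection `s_i` acting by value. -/
def swapVal (i v : ℕ) : ℕ := if v = i then i + 1 else if v = i + 1 then i else v

/-- The permutation `s_{i_t} ⋯ s_{i_1}.(1, 2, …, n)` obtained by applying the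
word `w = [i_t, …, i_1]` (rightmost letter first, each acting by value) to the
identity. -/
def permOfWord (w : List ℕ) : ℕ → ℕ := w.foldr (fun i f => swapVal i ∘ f) id

/-- `w` is a word in letters `s_1, …, s_{n-1}` producing `π` from `(1, …, n)`. -/
def WordFor (n : ℕ) (w : List ℕ) (p : ℕ → ℕ) : Prop :=
  (∀ i ∈ w, 1 ≤ i ∧ i + 1 ≤ n) ∧ ∀ t, 1 ≤ t → t ≤ n → permOfWord w t = p t

/-- `w` is a reduced word for `π`: it produces `π` with minimal length. -/
def IsReducedWord (n : ℕ) (w : List ℕ) (p : ℕ → ℕ) : Prop :=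
  WordFor n w p ∧ ∀ w' : List ℕ, WordFor n w' p → w.length ≤ w'.length

/-- The atom `c_λ(π;x) = ρ̄_{i_t} ⋯ ρ̄_{i_1} . x_1^{λ_1} ⋯ x_n^{λ_n}`, computed
from a choice of reduced word for `π` (it is independent of this choice). -/
def atomPoly (lam : NPartition n) (p : ℕ → ℕ) : Poly :=
  if h : ∃ w : List ℕ, IsReducedWord n w p then
    applyOps rhoBarOp h.choose (lamMonomial lam)
  else 0

/-! ### `S_n^λ` -/

/-- The set `Q_λ` of distinct column lengths of `λ`. -/
def Qset (lam : NPartition n) : Finset ℕ := (Finset.Icc 1 (lam.part 1)).image (zeta lam)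

/-- `π ∈ S_n^λ`: an `n`-permutation increasing on each block `[q_{r-1}+1, q_r]`
cut out by the column lengths of `λ` (equivalently, `π_i < π_j` whenever
`i < j` and no element of `Q_λ` lies in `[i, j)`). -/
def InSnLam (lam : NPartition n) (p : ℕ → ℕ) : Prop :=
  IsNPerm n p ∧ ∀ i j, 1 ≤ i → i < j → j ≤ n →
    (∀ q ∈ Qset lam, q < i ∨ j ≤ q) → p i < p j

end KeyPoly

/-!
For `l ≥ 2`, the left scanning path originating at `(l, k)` first steps to the row
`h₀ = max {h : U(l-1, h) ≤ T(l, k)}` of column `l - 1` of the remnant `U`, and from there it is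
the left scanning path of `U` originating at `(l-1, h₀)`; hence `M(T; l, k) = g_{h₀}`.
Column strictness makes `h ↦ g_h` weakly increasing, so `{h ≤ q : g_h = Y_λ(σ)(l, k)}` is
the interval `[a, b]`, and, again by column strictness, `a ≤ h₀ ≤ b` says exactly
`T(l-1, a) ≤ T(l, k) < T(l-1, b+1)`. The theorem therefore holds box by box.
-/

theorem MonotoneOn.apply_eq_iff_exists_min'_le_le_max' {α β : Type*} [LinearOrder α]
    [PartialOrder β] {g : α → β} {s : Finset α} (hg : MonotoneOn g s) {a : α} (ha : a ∈ s)
    {y : β} [DecidablePred (g · = y)] :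
    g a = y ↔ ∃ hP : (s.filter (g · = y)).Nonempty,
      (s.filter (g · = y)).min' hP ≤ a ∧ a ≤ (s.filter (g · = y)).max' hP := by
  constructor
  · intro hay
    have hmem : a ∈ s.filter (g · = y) := Finset.mem_filter.2 ⟨ha, hay⟩
    exact ⟨⟨a, hmem⟩, Finset.min'_le _ _ hmem, Finset.le_max' _ _ hmem⟩
  · rintro ⟨hP, hmin, hmax⟩
    obtain ⟨hmin_mem, hmin_eq⟩ := Finset.mem_filter.1 (Finset.min'_mem _ hP)
    obtain ⟨hmax_mem, hmax_eq⟩ := Finset.mem_filter.1 (Finset.max'_mem _ hP)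
    exact le_antisymm (hmax_eq ▸ hg ha hmax_mem hmax) (hmin_eq ▸ hg hmin_mem ha hmin)

namespace KeyPoly

variable {n : ℕ}

section Shape

variable {lam : NPartition n} {j i : ℕ}

theorem zeta_antitone (lam : NPartition n) : Antitone (zeta lam) := fun _ _ hjj =>
  Finset.card_le_card fun _ hi => by
    simp only [Finset.mem_filter] at hi ⊢
    exact ⟨hi.1, hjj.trans hi.2⟩

theorem le_zeta_iff (hi : 1 ≤ i) : i ≤ zeta lam j ↔ i ≤ n ∧ j ≤ lam.part i := by
  constructor
  · intro hiz
    by_contra hout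
    have hsub : ((Finset.Icc 1 n).filter fun r => j ≤ lam.part r) ⊆ Finset.Icc 1 (i - 1) :=
      fun r hr => by
        simp only [Finset.mem_Icc, Finset.mem_filter] at hr ⊢
        refine ⟨hr.1.1, Nat.le_sub_one_of_lt (lt_of_not_ge fun hir => hout ?_)⟩
        exact ⟨hir.trans hr.1.2, hr.2.trans (lam.antitone hi hir)⟩
    have := Finset.card_le_card hsub
    simp only [Nat.card_Icc] at this
    exact absurd this (by unfold zeta at hiz; omega)
  · rintro ⟨hin, hpart⟩
    have hsub : Finset.Icc 1 i ⊆ (Finset.Icc 1 n).filter fun r => j ≤ lam.part r :=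
      fun r hr => by
        simp only [Finset.mem_Icc, Finset.mem_filter] at hr ⊢
        exact ⟨⟨hr.1, hr.2.trans hin⟩, hpart.trans (lam.antitone hr.1 hr.2)⟩
    simpa [zeta] using Finset.card_le_card hsub

theorem inShape_iff : InShape lam j i ↔ 1 ≤ j ∧ 1 ≤ i ∧ i ≤ zeta lam j := by
  unfold InShape
  constructor
  · rintro ⟨hj, hi, hin⟩
    exact ⟨hj, hi, (le_zeta_iff hi).2 hin⟩
  · rintro ⟨hj, hi, hiz⟩
    exact ⟨hj, hi, (le_zeta_iff hi).1 hiz⟩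

end Shape

section Tableau

variable {lam : NPartition n} {T : ℕ → ℕ → ℕ}

theorem IsSSYT.strictMonoOn_col (hT : IsSSYT lam T) {j : ℕ} (hj : 1 ≤ j) :
    StrictMonoOn (T j) (Set.Icc 1 (zeta lam j)) :=
  strictMonoOn_of_lt_add_one Set.ordConnected_Icc fun i _ hi hi1 =>
    hT.2.2 j i (inShape_iff.2 ⟨hj, by omega, hi1.2⟩)

theorem IsSSYT.le_apply_succ (hT : IsSSYT lam T) {j r : ℕ} (hj : 1 ≤ j)
    (hr : r ∈ Set.Icc 1 (zeta lam (j + 1))) : T j 1 ≤ T (j + 1) r :=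
  (hT.2.1 j 1 (inShape_iff.2 ⟨by omega, le_rfl, hr.1.trans hr.2⟩)).trans
    ((hT.strictMonoOn_col (by omega)).monotoneOn ⟨le_rfl, hr.1.trans hr.2⟩ hr hr.1)

theorem IsSSYT.lt_south (hT : IsSSYT lam T) {l k : ℕ} (h : InShape lam l k) :
    T l k < south lam T l k := by
  unfold south
  split_ifs with hk
  · exact hT.2.2 l k hk
  · exact Nat.lt_succ_of_le (hT.1 l k h).2

end Tableau

section MaxRow

variable {T : ℕ → ℕ → ℕ} {c : ℕ → ℕ} {j x r : ℕ}

theorem maxRow_le : maxRow T c j x ≤ c j :=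
  Finset.sup_le fun _ hr => (Finset.mem_Icc.1 (Finset.mem_filter.1 hr).1).2

theorem le_maxRow (hr : r ∈ Set.Icc 1 (c j)) (hx : T j r ≤ x) : r ≤ maxRow T c j x :=
  Finset.le_sup (f := id) (Finset.mem_filter.2 ⟨Finset.mem_Icc.2 hr, hx⟩)

theorem maxRow_mono : Monotone (maxRow T c j) := fun _ _ hxy =>
  Finset.sup_mono fun r hr => by
    simp only [Finset.mem_filter] at hr ⊢
    exact ⟨hr.1, hr.2.trans hxy⟩

theorem apply_maxRow_le (h : maxRow T c j x ≠ 0) : T j (maxRow T c j x) ≤ x := by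
  have hne : ((Finset.Icc 1 (c j)).filter fun r => T j r ≤ x).Nonempty := by
    by_contra hempty
    exact h (by rw [maxRow, Finset.not_nonempty_iff_eq_empty.1 hempty, Finset.sup_empty]; rfl)
  obtain ⟨r, hr, hsup⟩ := Finset.exists_mem_eq_sup _ hne id
  rw [maxRow, hsup]
  exact (Finset.mem_filter.1 hr).2

theorem maxRow_mem_Icc (hc : 1 ≤ c j) (hx : T j 1 ≤ x) : maxRow T c j x ∈ Set.Icc 1 (c j) :=
  ⟨le_maxRow ⟨le_rfl, hc⟩ hx, maxRow_le⟩

theorem le_maxRow_iff (hT : MonotoneOn (T j) (Set.Icc 1 (c j))) (hr : r ∈ Set.Icc 1 (c j)) :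
    r ≤ maxRow T c j x ↔ T j r ≤ x :=
  ⟨fun h => (hT hr ⟨hr.1.trans h, maxRow_le⟩ h).trans (apply_maxRow_le (by have := hr.1; omega)),
    le_maxRow hr⟩

theorem maxRow_apply_self (hT : StrictMonoOn (T j) (Set.Icc 1 (c j)))
    (hr : r ∈ Set.Icc 1 (c j)) : maxRow T c j (T j r) = r := by
  refine le_antisymm (not_lt.1 fun h => ?_) (le_maxRow hr le_rfl)
  exact (apply_maxRow_le (by omega)).not_gt (hT hr ⟨by have := hr.1; omega, maxRow_le⟩ h)

theorem maxRow_le_iff {n b : ℕ} (hT : StrictMonoOn (T j) (Set.Icc 1 (c j))) (hb : 1 ≤ b)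
    (hx : x ≤ n) :
    maxRow T c j x ≤ b ↔ x ≤ (if b + 1 ≤ c j then T j (b + 1) else n + 1) - 1 := by
  split_ifs with hbc
  · have hpos : T j b < T j (b + 1) := hT ⟨hb, by omega⟩ ⟨by omega, hbc⟩ (by omega)
    rw [← not_lt, Nat.lt_iff_add_one_le, le_maxRow_iff hT.monotoneOn ⟨by omega, hbc⟩]
    omega
  · exact iff_of_true (maxRow_le.trans (by omega)) (by omega)

end MaxRow

section LeftRows

variable {T : ℕ → ℕ → ℕ} {c : ℕ → ℕ} {m x : ℕ}

/-- The column-1 value reached by the maximizing weakly decreasing sequence through columns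
`m, m-1, …, 1` of the remnant `c` whose first term is bounded by `x`. -/
def mwdsEnd (T : ℕ → ℕ → ℕ) (c : ℕ → ℕ) (m x : ℕ) : ℕ :=
  T 1 ((leftRows T c m x).getLastD 0)

theorem mwdsEnd_succ (hm : m ≠ 0) :
    mwdsEnd T c (m + 1) x = mwdsEnd T c m (T (m + 1) (maxRow T c (m + 1) x)) := by
  obtain ⟨m, rfl⟩ := Nat.exists_eq_succ_of_ne_zero hm
  simp only [mwdsEnd, leftRows, List.getLastD_cons]

theorem mwdsEnd_apply_maxRow (hT : StrictMonoOn (T m) (Set.Icc 1 (c m))) (hm : m ≠ 0)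
    (hx : maxRow T c m x ∈ Set.Icc 1 (c m)) :
    mwdsEnd T c m (T m (maxRow T c m x)) = mwdsEnd T c m x := by
  obtain ⟨m, rfl⟩ := Nat.exists_eq_succ_of_ne_zero hm
  simp only [mwdsEnd, leftRows, maxRow_apply_self hT hx]

theorem leftRows_getD_zero (hm : m ≠ 0) : (leftRows T c m x).getD 0 0 = maxRow T c m x := by
  obtain ⟨m, rfl⟩ := Nat.exists_eq_succ_of_ne_zero hm
  rfl

/-- The rows of the sequence, read column by column: `(leftRows T c m x).getD (m - j) 0` is its
row in column `j`. -/
theorem leftRows_getD_sub {j : ℕ} (hj : 1 ≤ j) (hjm : j < m) :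
    (leftRows T c m x).getD (m - j) 0 =
      maxRow T c j (T (j + 1) ((leftRows T c m x).getD (m - (j + 1)) 0)) := by
  induction m generalizing x with
  | zero => omega
  | succ m ih =>
    rcases Nat.lt_succ_iff_lt_or_eq.1 hjm with hjm | rfl
    · rw [show m + 1 - j = m - j + 1 by omega, show m + 1 - (j + 1) = m - (j + 1) + 1 by omega]
      exact ih hjm
    · simp only [leftRows, Nat.sub_self, show j + 1 - j = 1 by omega, List.getD_cons_succ,
        List.getD_cons_zero, leftRows_getD_zero (show j ≠ 0 by omega)]

theorem leftRows_getD_le {j : ℕ} (hj : j ∈ Set.Icc 1 m) :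
    (leftRows T c m x).getD (m - j) 0 ≤ c j := by
  rcases hj.2.lt_or_eq with hjm | rfl
  · rw [leftRows_getD_sub hj.1 hjm]
    exact maxRow_le
  · rw [Nat.sub_self, leftRows_getD_zero (by have := hj.1; omega)]
    exact maxRow_le

end LeftRows

section Monotonicity

variable {lam : NPartition n} {T : ℕ → ℕ → ℕ} {c : ℕ → ℕ}

theorem IsSSYT.monotoneOn_apply_maxRow (hT : IsSSYT lam T) {j : ℕ} (hj : 1 ≤ j)
    (hc : c j ∈ Set.Icc 1 (zeta lam j)) :
    MonotoneOn (fun x => T j (maxRow T c j x)) (Set.Ici (T j 1)) := fun _ hx _ _ hxy =>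
  (hT.strictMonoOn_col hj).monotoneOn
    ⟨(maxRow_mem_Icc hc.1 hx).1, maxRow_le.trans hc.2⟩
    ⟨(maxRow_mem_Icc hc.1 (le_trans hx hxy)).1, maxRow_le.trans hc.2⟩ (maxRow_mono hxy)

theorem IsSSYT.monotoneOn_mwdsEnd (hT : IsSSYT lam T) {m : ℕ}
    (hc : ∀ j ∈ Set.Icc 1 m, c j ∈ Set.Icc 1 (zeta lam j)) :
    MonotoneOn (mwdsEnd T c m) (Set.Ici (T m 1)) := by
  induction m with
  | zero => exact fun _ _ _ _ _ => le_rfl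
  | succ m ih =>
    have hcm := hc (m + 1) ⟨by omega, le_rfl⟩
    have hstep := hT.monotoneOn_apply_maxRow (by omega) hcm
    rcases Nat.eq_zero_or_pos m with rfl | hm
    · exact hstep
    · have hcomp : mwdsEnd T c (m + 1) =
          mwdsEnd T c m ∘ fun x => T (m + 1) (maxRow T c (m + 1) x) :=
        funext fun _ => mwdsEnd_succ hm.ne'
      rw [hcomp]
      refine (ih fun j hj => hc j ⟨hj.1, by have := hj.2; omega⟩).comp hstep fun x hx => ?_
      exact hT.le_apply_succ hm ⟨(maxRow_mem_Icc hcm.1 hx).1, maxRow_le.trans hcm.2⟩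

theorem IsSSYT.monotoneOn_leftEndVal (hT : IsSSYT lam T) {m : ℕ} (hm : 1 ≤ m)
    (hc : ∀ j ∈ Set.Icc 1 m, c j ∈ Set.Icc 1 (zeta lam j)) :
    MonotoneOn (leftEndVal T c m) (Set.Icc 1 (c m)) := by
  have hcol : MonotoneOn (T m) (Set.Icc 1 (c m)) :=
    ((hT.strictMonoOn_col hm).mono (Set.Icc_subset_Icc_right (hc m ⟨hm, le_rfl⟩).2)).monotoneOn
  exact (hT.monotoneOn_mwdsEnd hc).comp hcol fun r hr =>
    hcol ⟨le_rfl, hr.1.trans hr.2⟩ hr hr.1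

end Monotonicity

section Remnant

variable {lam : NPartition n} {T : ℕ → ℕ → ℕ} {c : ℕ → ℕ} {l : ℕ}

/-- `c` is the column-length function of a top-justified subshape of the first `l` columns
of `λ`. -/
structure IsSubshape (lam : NPartition n) (l : ℕ) (c : ℕ → ℕ) : Prop where
  le_zeta : ∀ j ∈ Set.Icc 1 l, c j ≤ zeta lam j
  antitoneOn : AntitoneOn c (Set.Icc 1 l)

theorem IsSubshape.strictMonoOn_col (hc : IsSubshape lam l c) (hT : IsSSYT lam T) {j : ℕ}
    (hj : j ∈ Set.Icc 1 l) : StrictMonoOn (T j) (Set.Icc 1 (c j)) :=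
  (hT.strictMonoOn_col hj.1).mono (Set.Icc_subset_Icc_right (hc.le_zeta j hj))

theorem IsSubshape.mem_Icc (hc : IsSubshape lam l c) (hcl : 1 ≤ c l) {j : ℕ}
    (hj : j ∈ Set.Icc 1 l) : c j ∈ Set.Icc 1 (zeta lam j) :=
  ⟨hcl.trans (hc.antitoneOn hj ⟨hj.1.trans hj.2, le_rfl⟩ hj.2), hc.le_zeta j hj⟩

theorem IsSSYT.le_maxRow_apply_succ (hT : IsSSYT lam T) {j r : ℕ} (hj : 1 ≤ j)
    (hc : c (j + 1) ≤ c j) (hcz : c (j + 1) ≤ zeta lam (j + 1)) (hr : r ≤ c (j + 1)) :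
    r ≤ maxRow T c j (T (j + 1) r) := by
  rcases Nat.eq_zero_or_pos r with rfl | hr1
  · exact Nat.zero_le _
  · exact le_maxRow ⟨hr1, hr.trans hc⟩
      (hT.2.1 j r (inShape_iff.2 ⟨by omega, hr1, hr.trans hcz⟩))

theorem IsSSYT.isSubshape_leftRemovePath (hT : IsSSYT lam T) (hc : IsSubshape lam l c)
    (hl : 1 ≤ l) (hcl : 1 ≤ c l) :
    IsSubshape lam l (leftRemovePath T c l) ∧ leftRemovePath T c l l = c l - 1 := by
  set row := fun j => (leftRows T c l (T l (c l))).getD (l - j) 0 with hrow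
  have hval : ∀ j ∈ Set.Icc 1 l, leftRemovePath T c l j = row j - 1 :=
    fun j hj => if_pos hj
  have hrow_le : ∀ j ∈ Set.Icc 1 l, row j ≤ c j := fun j hj => leftRows_getD_le hj
  have hrow_succ : ∀ j, 1 ≤ j → j < l → row j = maxRow T c j (T (j + 1) (row (j + 1))) :=
    fun j hj hjl => leftRows_getD_sub hj hjl
  refine ⟨⟨fun j hj => ?_, antitoneOn_of_add_one_le Set.ordConnected_Icc fun j _ hj hj1 => ?_⟩, ?_⟩
  · rw [hval j hj]
    exact (Nat.sub_le _ _).trans ((hrow_le j hj).trans (hc.le_zeta j hj))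
  · rw [hval j hj, hval (j + 1) hj1]
    refine Nat.sub_le_sub_right ?_ 1
    rw [hrow_succ j hj.1 (by have := hj1.2; omega)]
    exact hT.le_maxRow_apply_succ hj.1 (hc.antitoneOn hj hj1 (Nat.le_succ j))
      (hc.le_zeta _ hj1) (hrow_le _ hj1)
  · rw [hval l ⟨hl, le_rfl⟩, hrow]
    simp only [Nat.sub_self, leftRows_getD_zero (show l ≠ 0 by omega),
      maxRow_apply_self (hc.strictMonoOn_col hT ⟨hl, le_rfl⟩) ⟨hcl, le_rfl⟩]

theorem IsSSYT.isSubshape_leftRemnantIter (hT : IsSSYT lam T) (hl : 1 ≤ l) {t : ℕ}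
    (ht : t ≤ zeta lam l) :
    IsSubshape lam l (leftRemnantIter T (zeta lam) l t) ∧
      leftRemnantIter T (zeta lam) l t l = zeta lam l - t := by
  induction t with
  | zero => exact ⟨⟨fun _ _ => le_rfl, (zeta_antitone lam).antitoneOn _⟩, rfl⟩
  | succ t ih =>
    obtain ⟨hsub, hlen⟩ := ih (by omega)
    obtain ⟨hsub', hlen'⟩ := hT.isSubshape_leftRemovePath hsub hl (by omega)
    exact ⟨hsub', hlen'.trans (by omega)⟩

theorem IsSSYT.isSubshape_leftRemnant (hT : IsSSYT lam T) {k : ℕ} (h : InShape lam l k) :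
    IsSubshape lam l (leftRemnant lam T l k) ∧ leftRemnant lam T l k l = k := by
  obtain ⟨hl, -, hk⟩ := inShape_iff.1 h
  obtain ⟨hsub, hlen⟩ := hT.isSubshape_leftRemnantIter hl (Nat.sub_le (zeta lam l) k)
  exact ⟨hsub, hlen.trans (by omega)⟩

end Remnant

section Scanning

variable {lam : NPartition n} {T : ℕ → ℕ → ℕ} {k : ℕ}

theorem IsSSYT.leftScanValue_one (hT : IsSSYT lam T) (h : InShape lam 1 k) :
    leftScanValue lam T 1 k = T 1 k := by
  obtain ⟨hU, hUl⟩ := hT.isSubshape_leftRemnant h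
  show T 1 (maxRow T (leftRemnant lam T 1 k) 1 (T 1 k)) = T 1 k
  rw [maxRow_apply_self (hU.strictMonoOn_col hT ⟨le_rfl, le_rfl⟩) ⟨h.2.1, hUl.ge⟩]

theorem IsSSYT.leftScanValue_succ (hT : IsSSYT lam T) {m : ℕ} (hm : 1 ≤ m)
    (h : InShape lam (m + 1) k) :
    leftScanValue lam T (m + 1) k =
      leftEndVal T (leftRemnant lam T (m + 1) k) m
        (maxRow T (leftRemnant lam T (m + 1) k) m (T (m + 1) k)) := by
  obtain ⟨-, hk, hkz⟩ := inShape_iff.1 h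
  obtain ⟨hU, hUl⟩ := hT.isSubshape_leftRemnant h
  have hUm : k ≤ leftRemnant lam T (m + 1) k m :=
    hUl.ge.trans (hU.antitoneOn ⟨hm, by omega⟩ ⟨by omega, le_rfl⟩ (Nat.le_succ m))
  show mwdsEnd T _ (m + 1) (T (m + 1) k) = mwdsEnd T _ m (T m (maxRow T _ m (T (m + 1) k)))
  rw [mwdsEnd_succ (by omega),
    maxRow_apply_self (hU.strictMonoOn_col hT ⟨by omega, le_rfl⟩) ⟨hk, hUl.ge⟩,
    mwdsEnd_apply_maxRow (hU.strictMonoOn_col hT ⟨hm, by omega⟩) (by omega)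
      (maxRow_mem_Icc (by omega) (hT.le_apply_succ hm ⟨hk, hkz⟩))]

theorem IsSSYT.leftScanValue_eq_keyTab_iff (hT : IsSSYT lam T) (sg : ℕ → ℕ) {l : ℕ}
    (h : InShape lam l k) :
    leftScanValue lam T l k = keyTab lam sg l k ↔ T l k ∈ Gset lam T sg l k := by
  obtain ⟨hl, hk, hkz⟩ := inShape_iff.1 h
  obtain rfl | ⟨m, hm, rfl⟩ : l = 1 ∨ ∃ m, 1 ≤ m ∧ l = m + 1 :=
    (eq_or_lt_of_le hl).imp Eq.symm fun hl => ⟨l - 1, by omega, by omega⟩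
  · simp [hT.leftScanValue_one h, Gset]
  rw [hT.leftScanValue_succ hm h]
  simp only [Gset, Nat.add_eq_right, Nat.add_sub_cancel, show m ≠ 0 by omega, if_false,
    Set.mem_dite_empty_right]
  obtain ⟨hU, hUl⟩ := hT.isSubshape_leftRemnant h
  set U := leftRemnant lam T (m + 1) k
  set q := maxRow T U m (south lam T (m + 1) k - 1)
  have hcol := hU.strictMonoOn_col hT ⟨hm, by omega⟩
  have hUcol : ∀ j ∈ Set.Icc 1 m, U j ∈ Set.Icc 1 (zeta lam j) := fun j hj =>
    hU.mem_Icc (hUl ▸ hk) ⟨hj.1, hj.2.trans (Nat.le_succ m)⟩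
  have hUm : 1 ≤ U m := (hUcol m ⟨hm, le_rfl⟩).1
  have hqU : q ≤ U m := maxRow_le
  have hxs : T (m + 1) k ≤ south lam T (m + 1) k - 1 := Nat.le_sub_one_of_lt (hT.lt_south h)
  have h0 : maxRow T U m (T (m + 1) k) ∈ Finset.Icc 1 q := Finset.mem_Icc.2
    ⟨(maxRow_mem_Icc hUm (hT.le_apply_succ hm ⟨hk, hkz⟩)).1, maxRow_mono hxs⟩
  have hg : MonotoneOn (leftEndVal T U m) (Finset.Icc 1 q : Set ℕ) :=
    (hT.monotoneOn_leftEndVal hm hUcol).mono (by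
      rw [Finset.coe_Icc]
      exact Set.Icc_subset_Icc_right hqU)
  rw [hg.apply_eq_iff_exists_min'_le_le_max' h0]
  refine exists_congr fun hP => ?_
  have hmin := Finset.mem_Icc.1 (Finset.mem_filter.1 (Finset.min'_mem _ hP)).1
  have hmax := Finset.mem_Icc.1 (Finset.mem_filter.1 (Finset.max'_mem _ hP)).1
  rw [Set.mem_Icc, le_min_iff, and_iff_left hxs,
    le_maxRow_iff hcol.monotoneOn ⟨hmin.1, hmin.2.trans hqU⟩,
    maxRow_le_iff hcol hmax.1 (hT.1 _ _ h).2]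

end Scanning

theorem leftScan_eq_key_iff_Gset_general (n : ℕ) (lam : NPartition n)
    (sg : ℕ → ℕ) (T : ℕ → ℕ → ℕ) (hT : IsSSYT lam T) :
    (∀ l k, InShape lam l k → leftScanValue lam T l k = keyTab lam sg l k) ↔
      (∀ l k, InShape lam l k → T l k ∈ Gset lam T sg l k) :=
  forall₂_congr fun _ _ => forall_congr' fun h => hT.leftScanValue_eq_keyTab_iff sg h

/-- Theorem 9.2.  `M(T) = Y_λ(σ)` iff every entry of `T`
lies in the corresponding set `G_λ(T, σ; l, k)`. -/
theorem leftScan_eq_key_iff_Gset (n : ℕ) (hn : 1 ≤ n) (lam : NPartition n)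
    (sg : ℕ → ℕ) (hsg : IsNPerm n sg) (T : ℕ → ℕ → ℕ) (hT : IsSSYT lam T) :
    (∀ l k, InShape lam l k → leftScanValue lam T l k = keyTab lam sg l k) ↔
      (∀ l k, InShape lam l k → T l k ∈ Gset lam T sg l k) :=
  leftScan_eq_key_iff_Gset_general n lam sg T hT

end KeyPoly
end
end

section
/- For every 1 ≤ i ≤ n−2 and every polynomial P ∈ ℚ[x_1,…,x_n], the operators ρ̄_i := ρ_i − 1 satisfy the braid relation ρ̄_i ρ̄_{i+1} ρ̄_i P = ρ̄_{i+1} ρ̄_i ρ̄_{i+1} P. -/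
/-
Common combinatorial set-up for "Tableaux for Key Polynomials, Demazure
Characters, and Atoms" (Proctor–Willis).

Conventions: a box `(j, i)` means column `j`, row `i`, both 1-indexed.
Partial (remnant) tableaux are encoded by their column-length functions
`c : ℕ → ℕ` (each column of a remnant is a top segment of the original
column), together with the ambient value function `T : ℕ → ℕ → ℕ`.
-/

open scoped BigOperators Classical

noncomputable section

/-!
Both sides of the braid relation for `ρ_i` are the Demazure operator of the longest element of
the copy of `S₃` permuting `x_i, x_{i+1}, x_{i+2}`: multiplied by the Vandermonde product
`Δ = (x_i - x_{i+1})(x_i - x_{i+2})(x_{i+1} - x_{i+2})`, each of `ρ_i ρ_{i+1} ρ_i P` and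
`ρ_{i+1} ρ_i ρ_{i+1} P` becomes the `S₃`-antisymmetrization of `x_i² x_{i+1} P`, and `Δ` is not a
zero divisor. Since `ρ_i` is linear and idempotent,
`ρ̄_i ρ̄_{i+1} ρ̄_i = ρ_i ρ_{i+1} ρ_i - ρ_i ρ_{i+1} - ρ_{i+1} ρ_i + ρ_i + ρ_{i+1} - 1`,
which is symmetric in `i ↔ i + 1` except for the braid word.
-/

namespace KeyPoly

open MvPolynomial

theorem X_sub_X_dvd_sub_rename_swap {R σ : Type*} [CommRing R] [DecidableEq σ] (a b : σ)
    (p : MvPolynomial σ R) : X a - X b ∣ p - rename (Equiv.swap a b) p := by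
  induction p using MvPolynomial.induction_on with
  | C r => simp
  | add p q hp hq => simpa [add_sub_add_comm] using dvd_add hp hq
  | mul_X p j hp =>
    have hX : X a - X b ∣ (X j : MvPolynomial σ R) - X (Equiv.swap a b j) := by
      rw [Equiv.swap_apply_def]
      split_ifs with hja hjb
      · simp [hja]
      · simp [hjb, dvd_sub_comm]
      · simp
    rw [map_mul, rename_X, show p * X j - rename (Equiv.swap a b) p * X (Equiv.swap a b j) =
        (p - rename (Equiv.swap a b) p) * X j +
          rename (Equiv.swap a b) p * (X j - X (Equiv.swap a b j)) by ring]
    exact dvd_add (dvd_mul_of_dvd_left hp _) (dvd_mul_of_dvd_right hX _)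

theorem X_sub_X_ne_zero {R σ : Type*} [CommRing R] [Nontrivial R] {a b : σ} (h : a ≠ b) :
    (X a - X b : MvPolynomial σ R) ≠ 0 :=
  sub_ne_zero.mpr ((X_injective (σ := σ) (R := R)).ne h)

section

variable (i : ℕ) (P Q : Poly)

theorem sOp_mul : sOp i (P * Q) = sOp i P * sOp i Q := map_mul _ P Q

theorem sOp_sub : sOp i (P - Q) = sOp i P - sOp i Q := map_sub _ P Q

theorem sOp_pow (k : ℕ) : sOp i (P ^ k) = sOp i P ^ k := map_pow _ P k

theorem sOp_X_self : sOp i (X i) = X (i + 1) := by simp [sOp]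

theorem sOp_X_succ : sOp i (X (i + 1)) = X i := by simp [sOp]

theorem sOp_X_of_ne {j : ℕ} (h₁ : j ≠ i) (h₂ : j ≠ i + 1) : sOp i (X j) = X j := by
  simp [sOp, Equiv.swap_apply_of_ne_of_ne h₁ h₂]

theorem sOp_succ_X : sOp (i + 1) (X i) = X i := sOp_X_of_ne _ (by omega) (by omega)

theorem sOp_X_add_two : sOp i (X (i + 2)) = X (i + 2) := sOp_X_of_ne _ (by omega) (by omega)

theorem sOp_sOp : sOp i (sOp i P) = P := by
  rw [sOp, sOp, rename_rename, Function.Involutive.comp_self (Equiv.swap_apply_self i (i + 1)),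
    rename_id_apply]

theorem sOp_braid : sOp (i + 1) (sOp i (sOp (i + 1) P)) = sOp i (sOp (i + 1) (sOp i P)) := by
  simp only [sOp, rename_rename]
  congr 2
  funext x
  simp only [Function.comp_apply, Equiv.swap_apply_def]
  split_ifs <;> omega

end

section

variable (i : ℕ) (P Q : Poly)

theorem rhoOp_spec : (X i - X (i + 1)) * rhoOp i P = X i * P - X (i + 1) * sOp i P := by
  obtain ⟨R, hR⟩ := X_sub_X_dvd_sub_rename_swap i (i + 1) (X i * P)
  have hex : ∃ Q : Poly, (X i - X (i + 1)) * Q = X i * P - sOp i (X i * P) := ⟨R, hR.symm⟩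
  rw [rhoOp, dif_pos hex, hex.choose_spec, sOp_mul, sOp_X_self]

variable {i P Q}

theorem rhoOp_eq_of_mul_eq (h : (X i - X (i + 1)) * Q = X i * P - X (i + 1) * sOp i P) :
    rhoOp i P = Q :=
  mul_left_cancel₀ (X_sub_X_ne_zero (by omega)) ((rhoOp_spec i P).trans h.symm)

variable (i P Q)

theorem sOp_rhoOp : sOp i (rhoOp i P) = rhoOp i P := by
  have h := congrArg (sOp i) (rhoOp_spec i P)
  simp only [sOp_mul, sOp_sub, sOp_X_self, sOp_X_succ, sOp_sOp] at h
  refine mul_left_cancel₀ (X_sub_X_ne_zero (R := ℚ) (show i ≠ i + 1 by omega)) ?_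
  linear_combination -h - rhoOp_spec i P

theorem rhoOp_rhoOp : rhoOp i (rhoOp i P) = rhoOp i P :=
  rhoOp_eq_of_mul_eq (by rw [sOp_rhoOp]; ring)

theorem rhoOp_sub : rhoOp i (P - Q) = rhoOp i P - rhoOp i Q :=
  rhoOp_eq_of_mul_eq (by
    rw [sOp_sub]; linear_combination rhoOp_spec i P - rhoOp_spec i Q)

end

def vandermonde3 (i : ℕ) : Poly :=
  (X i - X (i + 1)) * (X i - X (i + 2)) * (X (i + 1) - X (i + 2))

theorem vandermonde3_ne_zero (i : ℕ) : vandermonde3 i ≠ 0 :=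
  mul_ne_zero (mul_ne_zero (X_sub_X_ne_zero (by omega)) (X_sub_X_ne_zero (by omega)))
    (X_sub_X_ne_zero (by omega))

def antisymmetrizer3 (i : ℕ) (f : Poly) : Poly :=
  f - sOp i f - sOp (i + 1) f + sOp i (sOp (i + 1) f) + sOp (i + 1) (sOp i f)
    - sOp i (sOp (i + 1) (sOp i f))

theorem vandermonde3_mul_rhoOp_rhoOp_rhoOp (i : ℕ) (P : Poly) :
    vandermonde3 i * rhoOp i (rhoOp (i + 1) (rhoOp i P)) =
      antisymmetrizer3 i (X i ^ 2 * X (i + 1) * P) := by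
  have h₁ := rhoOp_spec i P
  have h₂ : (X i - X (i + 2)) * sOp (i + 1) (rhoOp i P) =
      X i * sOp (i + 1) P - X (i + 2) * sOp (i + 1) (sOp i P) := by
    simpa only [sOp_mul, sOp_sub, sOp_succ_X, sOp_X_self] using congrArg (sOp (i + 1)) h₁
  have h₃ : (X (i + 1) - X (i + 2)) * sOp i (sOp (i + 1) (rhoOp i P)) =
      X (i + 1) * sOp i (sOp (i + 1) P) - X (i + 2) * sOp i (sOp (i + 1) (sOp i P)) := by
    simpa only [sOp_mul, sOp_sub, sOp_X_self, sOp_X_add_two] using congrArg (sOp i) h₂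
  have h₄ := rhoOp_spec (i + 1) (rhoOp i P)
  have h₅ : (X i - X (i + 2)) * sOp i (rhoOp (i + 1) (rhoOp i P)) =
      X i * rhoOp i P - X (i + 2) * sOp i (sOp (i + 1) (rhoOp i P)) := by
    simpa only [sOp_mul, sOp_sub, sOp_X_succ, sOp_X_add_two, sOp_rhoOp]
      using congrArg (sOp i) h₄
  have h₆ := rhoOp_spec i (rhoOp (i + 1) (rhoOp i P))
  simp only [vandermonde3, antisymmetrizer3, sOp_mul, sOp_pow, sOp_X_self, sOp_X_succ,
    sOp_succ_X, sOp_X_add_two]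
  -- Peel off one `ρ` at a time: `Δ = (x_i - x_{i+2})(x_{i+1} - x_{i+2}) · (x_i - x_{i+1})` is an
  -- `s_i`-invariant factor times the denominator of the outer `ρ_i`.
  linear_combination (X i - X (i + 2)) * (X (i + 1) - X (i + 2)) * h₆
    + X i * (X i - X (i + 2)) * h₄ - X (i + 1) * (X (i + 1) - X (i + 2)) * h₅
    + X i * X (i + 1) * h₁ - X i * X (i + 2) * h₂ + X (i + 1) * X (i + 2) * h₃

theorem vandermonde3_mul_rhoOp_succ_rhoOp_rhoOp_succ (i : ℕ) (P : Poly) :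
    vandermonde3 i * rhoOp (i + 1) (rhoOp i (rhoOp (i + 1) P)) =
      antisymmetrizer3 i (X i ^ 2 * X (i + 1) * P) := by
  have h₁ := rhoOp_spec (i + 1) P
  have h₂ : (X i - X (i + 2)) * sOp i (rhoOp (i + 1) P) =
      X i * sOp i P - X (i + 2) * sOp i (sOp (i + 1) P) := by
    simpa only [sOp_mul, sOp_sub, sOp_X_succ, sOp_X_add_two] using congrArg (sOp i) h₁
  have h₃ : (X i - X (i + 1)) * sOp (i + 1) (sOp i (rhoOp (i + 1) P)) =
      X i * sOp (i + 1) (sOp i P) - X (i + 1) * sOp i (sOp (i + 1) (sOp i P)) := by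
    simpa only [sOp_mul, sOp_sub, sOp_succ_X, sOp_X_succ, sOp_braid]
      using congrArg (sOp (i + 1)) h₂
  have h₄ := rhoOp_spec i (rhoOp (i + 1) P)
  have h₅ : (X i - X (i + 2)) * sOp (i + 1) (rhoOp i (rhoOp (i + 1) P)) =
      X i * rhoOp (i + 1) P - X (i + 2) * sOp (i + 1) (sOp i (rhoOp (i + 1) P)) := by
    simpa only [sOp_mul, sOp_sub, sOp_succ_X, sOp_X_self, sOp_rhoOp]
      using congrArg (sOp (i + 1)) h₄
  have h₆ := rhoOp_spec (i + 1) (rhoOp i (rhoOp (i + 1) P))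
  simp only [vandermonde3, antisymmetrizer3, sOp_mul, sOp_pow, sOp_X_self, sOp_X_succ,
    sOp_succ_X, sOp_X_add_two]
  -- As above, now with `Δ = (x_i - x_{i+1})(x_i - x_{i+2}) · (x_{i+1} - x_{i+2})`.
  linear_combination (X i - X (i + 1)) * (X i - X (i + 2)) * h₆
    + X (i + 1) * (X i - X (i + 2)) * h₄ - X (i + 2) * (X i - X (i + 1)) * h₅
    + X i ^ 2 * h₁ - X (i + 1) ^ 2 * h₂ + X (i + 2) ^ 2 * h₃

theorem rhoOp_braid (i : ℕ) (P : Poly) :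
    rhoOp i (rhoOp (i + 1) (rhoOp i P)) = rhoOp (i + 1) (rhoOp i (rhoOp (i + 1) P)) :=
  mul_left_cancel₀ (vandermonde3_ne_zero i) <| by
    rw [vandermonde3_mul_rhoOp_rhoOp_rhoOp, vandermonde3_mul_rhoOp_succ_rhoOp_rhoOp_succ]

theorem rhoBarOp_braid_general (i : ℕ) (P : Poly) :
    rhoBarOp i (rhoBarOp (i + 1) (rhoBarOp i P)) =
      rhoBarOp (i + 1) (rhoBarOp i (rhoBarOp (i + 1) P)) := by
  simp only [rhoBarOp, rhoOp_sub]
  linear_combination rhoOp_braid i P - rhoOp_rhoOp i P + rhoOp_rhoOp (i + 1) P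

/-- The operators `ρ̄_i = ρ_i - 1` satisfy the braid
relation `ρ̄_i ρ̄_{i+1} ρ̄_i = ρ̄_{i+1} ρ̄_i ρ̄_{i+1}` for `1 ≤ i ≤ n - 2`. -/
theorem rhoBarOp_braid (n : ℕ) (i : ℕ) (hi : 1 ≤ i) (hin : i + 2 ≤ n)
    (P : Poly) (hP : ↑P.vars ⊆ Set.Icc 1 n) :
    rhoBarOp i (rhoBarOp (i + 1) (rhoBarOp i P)) =
      rhoBarOp (i + 1) (rhoBarOp i (rhoBarOp (i + 1) P)) :=
  rhoBarOp_braid_general i P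

end KeyPoly
end
end

section
/- Let λ be an n-partition and let T be a semistandard tableau of shape λ. Then for every box (l,k) of λ one has M(T;l,k) ≤ T(l,k); that is, the left scanning tableau M(T) is dominated entrywise by T. -/
/-
Common combinatorial set-up for "Tableaux for Key Polynomials, Demazure
Characters, and Atoms" (Proctor–Willis).

Conventions: a box `(j, i)` means column `j`, row `i`, both 1-indexed.
Partial (remnant) tableaux are encoded by their column-length functions
`c : ℕ → ℕ` (each column of a remnant is a top segment of the original
column), together with the ambient value function `T : ℕ → ℕ → ℕ`.
-/

open scoped BigOperators Classical

noncomputable section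

namespace KeyPoly

variable {n : ℕ}

lemma zeta_antitone' (lam : NPartition n) {a b : ℕ} (hab : a ≤ b) :
    zeta lam b ≤ zeta lam a := by
  apply Finset.card_le_card
  intro i hi
  simp only [Finset.mem_filter] at *
  exact ⟨hi.1, le_trans hab hi.2⟩

lemma inShape_of_le_zeta (lam : NPartition n) {j m : ℕ} (hj : 1 ≤ j) (hm : 1 ≤ m)
    (hmz : m ≤ zeta lam j) : InShape lam j m := by
  refine ⟨hj, hm, ?_, ?_⟩
  · calc m ≤ zeta lam j := hmz
    _ ≤ n := by
      unfold zeta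
      calc _ ≤ (Finset.Icc 1 n).card := Finset.card_filter_le _ _
      _ = n := by simp [Nat.card_Icc]
  · by_contra h
    push_neg at h
    have hsub : (Finset.Icc 1 n).filter (fun i => j ≤ lam.part i) ⊆ Finset.Icc 1 (m - 1) := by
      intro i hi
      simp only [Finset.mem_filter, Finset.mem_Icc] at *
      refine ⟨hi.1.1, ?_⟩
      by_contra hc
      push_neg at hc
      have : lam.part i ≤ lam.part m := lam.antitone hm (by omega)
      omega
    have hcard := Finset.card_le_card hsub
    unfold zeta at hmz
    simp [Nat.card_Icc] at hcard
    omega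

lemma le_zeta_of_inShape (lam : NPartition n) {l k : ℕ} (h : InShape lam l k) :
    k ≤ zeta lam l := by
  obtain ⟨hl, hk, hkn, hlk⟩ := h
  have hsub : Finset.Icc 1 k ⊆ (Finset.Icc 1 n).filter (fun i => l ≤ lam.part i) := by
    intro i hi
    simp only [Finset.mem_Icc, Finset.mem_filter] at *
    exact ⟨⟨hi.1, le_trans hi.2 hkn⟩, le_trans hlk (lam.antitone hi.1 hi.2)⟩
  have := Finset.card_le_card hsub
  simpa [zeta, Nat.card_Icc] using this

lemma maxRow_spec (T : ℕ → ℕ → ℕ) (c : ℕ → ℕ) {j x r : ℕ} (hr : 1 ≤ r) (hrc : r ≤ c j)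
    (hTx : T j r ≤ x) :
    r ≤ maxRow T c j x ∧ maxRow T c j x ≤ c j ∧ T j (maxRow T c j x) ≤ x := by
  have hrs : r ∈ (Finset.Icc 1 (c j)).filter fun r => T j r ≤ x := by
    simp [Finset.mem_filter, Finset.mem_Icc, hr, hrc, hTx]
  have hne : ((Finset.Icc 1 (c j)).filter fun r => T j r ≤ x).Nonempty := ⟨r, hrs⟩
  obtain ⟨b, hb, hbe⟩ := Finset.exists_mem_eq_sup _ hne id
  simp only [Finset.mem_filter, Finset.mem_Icc] at hb
  unfold maxRow
  rw [hbe]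
  exact ⟨by simpa [hbe] using Finset.le_sup (f := id) hrs, hb.1.2, hb.2⟩

lemma getLastD_eq_getD' : ∀ (L : List ℕ), L ≠ [] → L.getLastD 0 = L.getD (L.length - 1) 0 := by
  intro L
  induction L with
  | nil => intro h; simp at h
  | cons a t ih =>
    intro _
    cases t with
    | nil => simp
    | cons b t' =>
      have := ih (by simp)
      simp only [List.getLastD_cons, List.length_cons] at *
      simpa using this

lemma leftRows_spec (lam : NPartition n) (T : ℕ → ℕ → ℕ) (hT : IsSSYT lam T) :
    ∀ (j : ℕ) (c : ℕ → ℕ) (x r : ℕ), 1 ≤ j → 1 ≤ r → r ≤ c j →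
    (∀ a b, 1 ≤ a → a ≤ b → b ≤ j → c b ≤ c a ∧ c a ≤ zeta lam a) →
    T j r ≤ x →
    (leftRows T c j x).length = j ∧
    ∀ i, i < j →
      r ≤ (leftRows T c j x).getD i 0 ∧
      (leftRows T c j x).getD i 0 ≤ c (j - i) ∧
      T (j - i) ((leftRows T c j x).getD i 0) ≤ x ∧
      ∀ i', i ≤ i' → i' < j →
        (leftRows T c j x).getD i 0 ≤ (leftRows T c j x).getD i' 0 := by
  intro j
  induction j with
  | zero => intro c x r hj; omega
  | succ j ih =>
    intro c x r _ hr hrc hc hTx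
    have hm := maxRow_spec T c hr hrc hTx
    set m := maxRow T c (j + 1) x with hmdef
    have hm1 : 1 ≤ m := le_trans hr hm.1
    rcases Nat.eq_zero_or_pos j with hj0 | hj1
    · subst hj0
      constructor
      · simp [leftRows]
      · intro i hi
        interval_cases i
        simp only [leftRows, List.getD_cons_zero, ← hmdef]
        refine ⟨hm.1, hm.2.1, hm.2.2, ?_⟩
        intro i' _ hi'
        interval_cases i'
        simp
    · -- j ≥ 1
      have hcj : c (j + 1) ≤ c j := (hc j (j + 1) hj1 (by omega) le_rfl).1
      have hmc : m ≤ c j := le_trans hm.2.1 hcj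
      have hshape : InShape lam (j + 1) m :=
        inShape_of_le_zeta lam (by omega) hm1
          (le_trans hm.2.1 (hc (j + 1) (j + 1) (by omega) le_rfl le_rfl).2)
      have hrow : T j m ≤ T (j + 1) m := hT.2.1 j m hshape
      have ihm := ih c (T (j + 1) m) m hj1 hm1 hmc
        (fun a b ha hab hbl => hc a b ha hab (by omega)) hrow
      have hx' : T (j + 1) m ≤ x := hm.2.2
      have hlr : leftRows T c (j + 1) x = m :: leftRows T c j (T (j + 1) m) := by
        simp [leftRows, ← hmdef]
      rw [hlr]
      constructor
      · simp [ihm.1]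
      · intro i hi
        have hgetD : ∀ i₀ : ℕ,
            (m :: leftRows T c j (T (j + 1) m)).getD (i₀ + 1) 0
              = (leftRows T c j (T (j + 1) m)).getD i₀ 0 := fun _ => rfl
        match i with
        | 0 =>
          simp only [List.getD_cons_zero]
          refine ⟨hm.1, by simpa using hm.2.1, by simpa using hm.2.2, ?_⟩
          intro i' _ hi'
          match i' with
          | 0 => simp
          | i₀ + 1 =>
            rw [hgetD]
            exact ((ihm.2 i₀ (by omega)).1)
        | i₀ + 1 =>
          have hi₀ : i₀ < j := by omega
          have hih := ihm.2 i₀ hi₀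
          rw [hgetD]
          have hsub : j + 1 - (i₀ + 1) = j - i₀ := by omega
          rw [hsub]
          refine ⟨le_trans hm.1 hih.1, hih.2.1, le_trans hih.2.2.1 hx', ?_⟩
          intro i' hii' hi'
          match i' with
          | 0 => omega
          | i₁ + 1 =>
            rw [hgetD]
            exact hih.2.2.2 i₁ (by omega) (by omega)

lemma remnant_inv (lam : NPartition n) (T : ℕ → ℕ → ℕ) (hT : IsSSYT lam T)
    (l : ℕ) (hl : 1 ≤ l) :
    ∀ r, r ≤ zeta lam l →
      (∀ a b, 1 ≤ a → a ≤ b → b ≤ l →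
        leftRemnantIter T (zeta lam) l r b ≤ leftRemnantIter T (zeta lam) l r a ∧
        leftRemnantIter T (zeta lam) l r a ≤ zeta lam a) ∧
      zeta lam l - r ≤ leftRemnantIter T (zeta lam) l r l := by
  intro r
  induction r with
  | zero =>
    intro _
    exact ⟨fun a b ha hab _ => ⟨zeta_antitone' lam hab, le_rfl⟩, by simp [leftRemnantIter]⟩
  | succ r ih =>
    intro hrz
    obtain ⟨hc, hcl⟩ := ih (by omega)
    set c := leftRemnantIter T (zeta lam) l r with hcdef
    have hcl1 : 1 ≤ c l := by omega
    have hmain := leftRows_spec lam T hT l c (T l (c l)) (c l) hl hcl1 le_rfl hc le_rfl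
    set L := leftRows T c l (T l (c l)) with hLdef
    have hiter : leftRemnantIter T (zeta lam) l (r + 1) = leftRemovePath T c l := rfl
    have hval : ∀ a, 1 ≤ a → a ≤ l →
        leftRemovePath T c l a = L.getD (l - a) 0 - 1 := by
      intro a ha hal
      simp [leftRemovePath, ha, hal, ← hLdef]
    rw [hiter]
    constructor
    · intro a b ha hab hbl
      rw [hval a ha (le_trans hab hbl), hval b (le_trans ha hab) hbl]
      have h1 := hmain.2 (l - b) (by omega)
      have h2 := hmain.2 (l - a) (by omega)
      constructor
      · have := h1.2.2.2 (l - a) (by omega) (by omega)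
        omega
      · have : l - (l - a) = a := by omega
        rw [this] at h2
        have := (hc a a ha le_rfl (le_trans hab hbl)).2
        omega
    · rw [hval l hl le_rfl]
      have h0 := hmain.2 0 (by omega)
      simp only [Nat.sub_self] at *
      have := h0.1
      omega

/-- `M(T) ≤ T` entrywise: the left scanning tableau is
dominated by `T`. -/
theorem leftScanValue_le (n : ℕ) (hn : 1 ≤ n) (lam : NPartition n)
    (T : ℕ → ℕ → ℕ) (hT : IsSSYT lam T) (l k : ℕ) (hbox : InShape lam l k) :
    leftScanValue lam T l k ≤ T l k := by
  obtain ⟨hl1, hk1, hkn, hlk⟩ := hbox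
  have hkz : k ≤ zeta lam l := le_zeta_of_inShape lam ⟨hl1, hk1, hkn, hlk⟩
  have hinv := remnant_inv lam T hT l hl1 (zeta lam l - k) (Nat.sub_le _ _)
  have hceq : leftRemnant lam T l k = leftRemnantIter T (zeta lam) l (zeta lam l - k) := rfl
  rw [← hceq] at hinv
  set c := leftRemnant lam T l k with hc
  have hcl : k ≤ c l := by have := hinv.2; omega
  have hmain := leftRows_spec lam T hT l c (T l k) k hl1 hk1 hcl hinv.1 le_rfl
  show leftEndVal T c l k ≤ T l k
  unfold leftEndVal
  set L := leftRows T c l (T l k) with hL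
  have hlen : L.length = l := hmain.1
  have hne : L ≠ [] := by
    intro h
    rw [h] at hlen
    simp at hlen
    omega
  rw [getLastD_eq_getD' L hne, hlen]
  have hfin := (hmain.2 (l - 1) (by omega)).2.2.1
  have h1 : l - (l - 1) = 1 := by omega
  rw [h1] at hfin
  exact hfin

end KeyPoly
end
end
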